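/- There exist for every c > 0 a matrix X ∈ M₂(ℂ) such that λ₂(|X|_qsym) > c · λ₂(|X|_sym), where λ₂ denotes the smallest eigenvalue. Explicitly, for X_θ := [[cos θ, 0],[sin θ, 0]] with θ ∈ (0, π/2), one has λ₂(|X_θ|_sym) = (1 − cos θ)/2 and λ₂(|X_θ|_qsym) = √((1 − cos θ)/2), so the ratio √(2/(1−cos θ)) tends to infinity as θ → 0⁺. -/

import Mathlib

open Matrix
open scoped ComplexOrder

/-- The square root of a positive semidefinite matrix (Mathlib's former definition). -/
noncomputable def Matrix.PosSemidef.sqrt {n 𝕜 : Type*} [Fintype n] [RCLike 𝕜] [DecidableEq n]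
    {A : Matrix n n 𝕜} (hA : A.PosSemidef) : Matrix n n 𝕜 :=
  (hA.1.eigenvectorUnitary : Matrix n n 𝕜) * diagonal ((↑) ∘ Real.sqrt ∘ hA.1.eigenvalues) *
  (star hA.1.eigenvectorUnitary : Matrix n n 𝕜)

lemma Matrix.PosSemidef.posSemidef_sqrt {n 𝕜 : Type*} [Fintype n] [RCLike 𝕜] [DecidableEq n]
    {A : Matrix n n 𝕜} (hA : A.PosSemidef) : hA.sqrt.PosSemidef := by
  have := (PosSemidef.diagonal (R := 𝕜) (d := ((↑) ∘ Real.sqrt ∘ hA.1.eigenvalues))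
    (fun i => by simp [Real.sqrt_nonneg])).mul_mul_conjTranspose_same
    (hA.1.eigenvectorUnitary : Matrix n n 𝕜)
  simpa [Matrix.PosSemidef.sqrt, Matrix.star_eq_conjTranspose] using this

/-- The usual modulus `|Z| = (Zᴴ Z)^(1/2)` (positive semidefinite square root). -/
noncomputable def mAbs {k : Type*} [Fintype k] [DecidableEq k]
    (Z : Matrix k k ℂ) : Matrix k k ℂ :=
  (Matrix.posSemidef_conjTranspose_mul_self Z).sqrt

lemma mAbs_posSemidef {k : Type*} [Fintype k] [DecidableEq k]
    (Z : Matrix k k ℂ) : (mAbs Z).PosSemidef :=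
  Matrix.PosSemidef.posSemidef_sqrt _

lemma psd_half_smul {k : Type*} [Fintype k] [DecidableEq k]
    {M : Matrix k k ℂ} (h : M.PosSemidef) :
    ((2:ℂ)⁻¹ • M).PosSemidef := by
  constructor
  · unfold Matrix.IsHermitian
    rw [conjTranspose_smul, h.1]
    norm_num
  · intro x
    convert smul_nonneg (by simp : (0:ℂ) ≤ (2:ℂ)⁻¹) (h.2 x) using 1
    simp only [smul_eq_mul, Finsupp.mul_sum, Matrix.smul_apply]
    exact Finsupp.sum_congr fun i _ => Finsupp.sum_congr fun j _ => by ring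

/-- The arithmetic symmetric modulus `(|Z| + |Z*|)/2`. -/
noncomputable def symMod {k : Type*} [Fintype k] [DecidableEq k]
    (Z : Matrix k k ℂ) : Matrix k k ℂ :=
  (2:ℂ)⁻¹ • (mAbs Z + mAbs Zᴴ)

lemma symMod_posSemidef {k : Type*} [Fintype k] [DecidableEq k]
    (Z : Matrix k k ℂ) : (symMod Z).PosSemidef :=
  psd_half_smul ((mAbs_posSemidef Z).add (mAbs_posSemidef Zᴴ))

lemma qsym_arg_psd {k : Type*} [Fintype k] [DecidableEq k]
    (Z : Matrix k k ℂ) :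
    ((2:ℂ)⁻¹ • (mAbs Z ^ 2 + mAbs Zᴴ ^ 2)).PosSemidef :=
  psd_half_smul (((mAbs_posSemidef Z).pow 2).add ((mAbs_posSemidef Zᴴ).pow 2))

/-- The quadratic symmetric modulus `((|Z|² + |Z*|²)/2)^(1/2)`. -/
noncomputable def qsymMod {k : Type*} [Fintype k] [DecidableEq k]
    (Z : Matrix k k ℂ) : Matrix k k ℂ :=
  (qsym_arg_psd Z).sqrt

lemma qsymMod_posSemidef {k : Type*} [Fintype k] [DecidableEq k]
    (Z : Matrix k k ℂ) : (qsymMod Z).PosSemidef :=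
  Matrix.PosSemidef.posSemidef_sqrt _

/-- The Schatten `p`-norm, as the `ℓ^p` norm of the singular values
(the eigenvalues of `|X|`). -/
noncomputable def schatten {k : Type*} [Fintype k] [DecidableEq k]
    (p : ℝ) (X : Matrix k k ℂ) : ℝ :=
  (∑ i, ((mAbs_posSemidef X).1.eigenvalues i) ^ p) ^ (1/p)

/-- The operator norm: the largest singular value. -/
noncomputable def opN {k : Type*} [Fintype k] [DecidableEq k]
    (X : Matrix k k ℂ) : ℝ :=
  ⨆ i, (mAbs_posSemidef X).1.eigenvalues i

/-- The Frobenius (Schatten-2) norm. -/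
noncomputable def frob {k : Type*} [Fintype k] [DecidableEq k]
    (X : Matrix k k ℂ) : ℝ :=
  Real.sqrt ((Xᴴ * X).trace.re)

/-- Smallest eigenvalue of the arithmetic symmetric modulus. -/
noncomputable def minEigSym {k : Type*} [Fintype k] [DecidableEq k]
    (Z : Matrix k k ℂ) : ℝ :=
  ⨅ i, (symMod_posSemidef Z).1.eigenvalues i

/-- Smallest eigenvalue of the quadratic symmetric modulus. -/
noncomputable def minEigQsym {k : Type*} [Fintype k] [DecidableEq k]
    (Z : Matrix k k ℂ) : ℝ :=
  ⨅ i, (qsymMod_posSemidef Z).1.eigenvalues i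

/-!
`X_θ` is a partial isometry, so `|X_θ|` and `|X_θ*|` are the orthogonal projections onto `e₁` and
onto `(cos θ, sin θ)`. Projections equal their squares, hence `|X_θ|_qsym = |X_θ|_sym ^ (1/2)` and
`λ₂(|X_θ|_qsym) = √λ₂(|X_θ|_sym)`. The matrix `|X_θ|_sym` has trace `1` and determinant
`sin² θ / 4`, so its smaller eigenvalue is `t = (1 - cos θ) / 2`, and `√t / t` is unbounded as
`θ → 0⁺`.
-/

namespace Matrix

variable {n : Type*} [Fintype n] [DecidableEq n] {A : Matrix n n ℂ}

theorem IsHermitian.iInf_eigenvalues_eq_sInf_spectrum (hA : A.IsHermitian) :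
    ⨅ i, hA.eigenvalues i = sInf (spectrum ℝ A) := by
  rw [hA.spectrum_real_eq_range_eigenvalues]
  rfl

theorem IsHermitian.iInf_eigenvalues_fin_two {A : Matrix (Fin 2) (Fin 2) ℂ}
    (hA : A.IsHermitian) :
    ⨅ i, hA.eigenvalues i = (A.trace.re - √(A.trace.re ^ 2 - 4 * A.det.re)) / 2 := by
  set a := hA.eigenvalues 0
  set b := hA.eigenvalues 1
  have hmin : ⨅ i, hA.eigenvalues i = min a b :=
    le_antisymm (le_min (ciInf_le (Set.finite_range _).bddBelow 0)
      (ciInf_le (Set.finite_range _).bddBelow 1))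
      (le_ciInf (Fin.forall_fin_two.2 ⟨min_le_left a b, min_le_right a b⟩))
  have htr : A.trace.re = a + b := by
    simp [hA.trace_eq_sum_eigenvalues, Fin.sum_univ_two, a, b]
  have hdet : A.det.re = a * b := by
    simp [hA.det_eq_prod_eigenvalues, Fin.prod_univ_two, a, b, ← Complex.ofReal_mul]
  have hdisc : A.trace.re ^ 2 - 4 * A.det.re = (a - b) ^ 2 := by rw [htr, hdet]; ring
  rw [hmin, hdisc, Real.sqrt_sq_eq_abs, htr, ← max_sub_min_eq_abs]
  linarith [min_add_max a b, min_comm a b, max_comm a b]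

namespace PosSemidef

theorem sqrt_eq_cfc (hA : A.PosSemidef) : hA.sqrt = cfc Real.sqrt A := by
  rw [hA.1.cfc_eq]
  rfl

open scoped MatrixOrder in
theorem sqrt_eq_of_mul_self_eq (hA : A.PosSemidef) {B : Matrix n n ℂ} (hB : B.PosSemidef)
    (h : B * B = A) : hA.sqrt = B := by
  rw [sqrt_eq_cfc, ← cfcₙ_eq_cfc, ← CFC.sqrt_eq_real_sqrt A hA.nonneg]
  exact CFC.sqrt_unique h hB.nonneg

theorem spectrum_real_sqrt (hA : A.PosSemidef) :
    spectrum ℝ hA.sqrt = Real.sqrt '' spectrum ℝ A := by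
  rw [hA.sqrt_eq_cfc]
  exact cfc_map_spectrum Real.sqrt A hA.1

theorem iInf_eigenvalues_sqrt [Nonempty n] (hA : A.PosSemidef) :
    ⨅ i, hA.posSemidef_sqrt.1.eigenvalues i = √(⨅ i, hA.1.eigenvalues i) := by
  rw [IsHermitian.iInf_eigenvalues_eq_sInf_spectrum, IsHermitian.iInf_eigenvalues_eq_sInf_spectrum,
    hA.spectrum_real_sqrt]
  exact (Monotone.map_csInf_of_continuousAt Real.continuous_sqrt.continuousAt
    (fun _ _ h ↦ Real.sqrt_le_sqrt h) (ContinuousFunctionalCalculus.spectrum_nonempty A hA.1)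
    A.finite_real_spectrum.bddBelow).symm

end PosSemidef

end Matrix

section PartialIsometry

variable {k : Type*} [Fintype k] {Z : Matrix k k ℂ}

theorem isIdempotentElem_conjTranspose_mul_self (h : Z * Zᴴ * Z = Z) :
    IsIdempotentElem (Zᴴ * Z) := by
  rw [IsIdempotentElem, mul_assoc, ← mul_assoc Z, h]

theorem isIdempotentElem_mul_conjTranspose_self (h : Z * Zᴴ * Z = Z) :
    IsIdempotentElem (Z * Zᴴ) := by
  rw [IsIdempotentElem, ← mul_assoc, h]

variable [DecidableEq k]

theorem mAbs_eq_of_mul_conjTranspose_mul_self (h : Z * Zᴴ * Z = Z) : mAbs Z = Zᴴ * Z :=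
  PosSemidef.sqrt_eq_of_mul_self_eq _ (posSemidef_conjTranspose_mul_self Z)
    (isIdempotentElem_conjTranspose_mul_self h)

theorem mAbs_conjTranspose_eq_of_mul_conjTranspose_mul_self (h : Z * Zᴴ * Z = Z) :
    mAbs Zᴴ = Z * Zᴴ := by
  have h' : Zᴴ * Zᴴᴴ * Zᴴ = Zᴴ := by
    simpa [Matrix.mul_assoc] using congrArg conjTranspose h
  simpa using mAbs_eq_of_mul_conjTranspose_mul_self h'

theorem minEigQsym_eq_sqrt_minEigSym [Nonempty k] (h : Z * Zᴴ * Z = Z) :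
    minEigQsym Z = √(minEigSym Z) := by
  have harg : (2 : ℂ)⁻¹ • (mAbs Z ^ 2 + mAbs Zᴴ ^ 2) = symMod Z := by
    rw [symMod, mAbs_eq_of_mul_conjTranspose_mul_self h,
      mAbs_conjTranspose_eq_of_mul_conjTranspose_mul_self h, sq, sq,
      (isIdempotentElem_conjTranspose_mul_self h).eq, (isIdempotentElem_mul_conjTranspose_self h).eq]
  unfold minEigQsym qsymMod
  rw [(qsym_arg_psd Z).iInf_eigenvalues_sqrt, IsHermitian.iInf_eigenvalues_eq_sInf_spectrum, harg,
    minEigSym, IsHermitian.iInf_eigenvalues_eq_sInf_spectrum]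

end PartialIsometry

section UnitColumn

variable {c s : ℝ}

theorem conjTranspose_mul_self_unitColumn (hcs : c ^ 2 + s ^ 2 = 1) :
    (!![(c : ℂ), 0; (s : ℂ), 0])ᴴ * !![(c : ℂ), 0; (s : ℂ), 0] = !![1, 0; 0, 0] := by
  have hcsC : (c : ℂ) ^ 2 + (s : ℂ) ^ 2 = 1 := mod_cast hcs
  ext i j
  fin_cases i <;> fin_cases j <;> simp [mul_apply, Fin.sum_univ_two, Complex.conj_ofReal]
  linear_combination hcsC

theorem mul_conjTranspose_self_unitColumn :
    !![(c : ℂ), 0; (s : ℂ), 0] * (!![(c : ℂ), 0; (s : ℂ), 0])ᴴ =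
      !![(c : ℂ) ^ 2, c * s; c * s, (s : ℂ) ^ 2] := by
  ext i j
  fin_cases i <;> fin_cases j <;> simp [mul_apply, Fin.sum_univ_two, Complex.conj_ofReal] <;> ring

theorem unitColumn_mul_conjTranspose_mul_self (hcs : c ^ 2 + s ^ 2 = 1) :
    !![(c : ℂ), 0; (s : ℂ), 0] * (!![(c : ℂ), 0; (s : ℂ), 0])ᴴ * !![(c : ℂ), 0; (s : ℂ), 0] =
      !![(c : ℂ), 0; (s : ℂ), 0] := by
  rw [mul_assoc, conjTranspose_mul_self_unitColumn hcs, mul_fin_two]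
  simp

theorem symMod_unitColumn (hcs : c ^ 2 + s ^ 2 = 1) :
    symMod !![(c : ℂ), 0; (s : ℂ), 0] =
      !![(1 + (c : ℂ) ^ 2) / 2, (c * s / 2 : ℂ); (c * s / 2 : ℂ), (s : ℂ) ^ 2 / 2] := by
  have h := unitColumn_mul_conjTranspose_mul_self hcs
  rw [symMod, mAbs_eq_of_mul_conjTranspose_mul_self h,
    mAbs_conjTranspose_eq_of_mul_conjTranspose_mul_self h, conjTranspose_mul_self_unitColumn hcs,
    mul_conjTranspose_self_unitColumn]
  ext i j
  fin_cases i <;> fin_cases j <;> simp <;> ring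

theorem minEigSym_unitColumn (hcs : c ^ 2 + s ^ 2 = 1) (hc : 0 ≤ c) :
    minEigSym !![(c : ℂ), 0; (s : ℂ), 0] = (1 - c) / 2 := by
  have htr : (symMod !![(c : ℂ), 0; (s : ℂ), 0]).trace.re = 1 := by
    rw [symMod_unitColumn hcs, trace_fin_two_of]
    simp [← Complex.ofReal_pow]
    linear_combination hcs / 2
  have hdet : (symMod !![(c : ℂ), 0; (s : ℂ), 0]).det.re = s ^ 2 / 4 := by
    rw [symMod_unitColumn hcs, det_fin_two_of]
    simp [← Complex.ofReal_pow]
    ring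
  rw [minEigSym, IsHermitian.iInf_eigenvalues_fin_two, htr, hdet,
    show (1 : ℝ) ^ 2 - 4 * (s ^ 2 / 4) = c ^ 2 by linear_combination -hcs, Real.sqrt_sq hc]

theorem minEigQsym_unitColumn (hcs : c ^ 2 + s ^ 2 = 1) (hc : 0 ≤ c) :
    minEigQsym !![(c : ℂ), 0; (s : ℂ), 0] = √((1 - c) / 2) := by
  rw [minEigQsym_eq_sqrt_minEigSym (unitColumn_mul_conjTranspose_mul_self hcs),
    minEigSym_unitColumn hcs hc]

end UnitColumn

theorem mul_lt_sqrt_of_sq_mul_lt {a t : ℝ} (ht : 0 < t) (h : a ^ 2 * t < 1) : a * t < √t :=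
  Real.lt_sqrt_of_sq_lt (by nlinarith)

/-- No universal constant `c` satisfies `λ₂(|X|_qsym) ≤ c·λ₂(|X|_sym)` for all
`X ∈ M₂`: for `X_θ = [[cos θ, 0], [sin θ, 0]]` with `θ ∈ (0, π/2)` one has
`λ₂(|X_θ|_sym) = (1−cos θ)/2` and `λ₂(|X_θ|_qsym) = √((1−cos θ)/2)`. -/
theorem stmt18 :
    (∀ c : ℝ, 0 < c → ∃ X : Matrix (Fin 2) (Fin 2) ℂ,
      c * minEigSym X < minEigQsym X) ∧
    (∀ θ : ℝ, θ ∈ Set.Ioo 0 (Real.pi / 2) →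
      minEigSym (!![((Real.cos θ : ℝ) : ℂ), 0; ((Real.sin θ : ℝ) : ℂ), 0]) =
        (1 - Real.cos θ) / 2 ∧
      minEigQsym (!![((Real.cos θ : ℝ) : ℂ), 0; ((Real.sin θ : ℝ) : ℂ), 0]) =
        Real.sqrt ((1 - Real.cos θ) / 2)) := by
  refine ⟨fun c hc ↦ ?_, fun θ hθ ↦ ?_⟩
  · -- `λ₂(|X|_sym) = (1 - x) / 2 = 1 / (2 (c² + 1))` stays below `1 / c²`.
    set x := c ^ 2 / (c ^ 2 + 1) with hx
    have hx0 : 0 < x := by positivity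
    have hx1 : x < 1 := (div_lt_one (by positivity)).2 (lt_add_one _)
    have hcs : x ^ 2 + √(1 - x ^ 2) ^ 2 = 1 := by
      rw [Real.sq_sqrt (by nlinarith)]
      ring
    refine ⟨!![(x : ℂ), 0; (√(1 - x ^ 2) : ℂ), 0], ?_⟩
    rw [minEigSym_unitColumn hcs hx0.le, minEigQsym_unitColumn hcs hx0.le]
    refine mul_lt_sqrt_of_sq_mul_lt (by linarith) ?_
    rw [hx]
    field_simp
    nlinarith
  · have hcos : 0 ≤ Real.cos θ :=
      (Real.cos_pos_of_mem_Ioo ⟨by linarith [Real.pi_pos, hθ.1], hθ.2⟩).le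
    exact ⟨minEigSym_unitColumn (Real.cos_sq_add_sin_sq θ) hcos,
      minEigQsym_unitColumn (Real.cos_sq_add_sin_sq θ) hcos⟩
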